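/- arXiv:1601.06464 — 3 statements merged into one kernel-verified Lean document; each statement's English description precedes it below -/
import Mathlib

section
/- Let $U_j \subset \mathbb{R}^s$ be compact sets and $a_j: \mathbb{R}^s \to \mathbb{R}^n$, $b_j: \mathbb{R}^s \to \mathbb{R}$ be affine maps for $j = 1,\dots,q$. Assume the cone $C := \mathrm{cone}\{(a_j(u_j), b_j(u_j)) \mid u_j \in U_j,\ j = 1,\dots,q\}$ (the smallest convex cone containing these points and the origin) is closed, and assume there exists $x_0 \in \mathbb{R}^n$ with $a_j(u_j)^\top x_0 \le b_j(u_j)$ for all $u_j \in U_j$ and all $j$. If every $x \in \mathbb{R}^n$ satisfying $a_j(u_j)^\top x \le b_j(u_j)$ for all $u_j \in U_j$, $j = 1,\dots,q$ also satisfies $\wp^\top x \ge r$, then $(-\wp, -r)$ belongs to the closed convex cone generated by $\{(0_n, 1)\} \cup \{(a_j(u_j), b_j(u_j)) \mid u_j \in U_j,\ j = 1,\dots,q\}$, and in fact this cone is already closed. -/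
/-!
Let `S` be the set of constraint vectors `(a_j(u), b_j(u))` and `K = cone (S ∪ {(0, 1)})`.
Since `cone S` is closed, `K = (cone S ∪ {0}) + ℝ₊ (0, 1)` is closed as soon as
`(0, -1) ∉ cone S`, and that holds because a feasible point `x₀` makes `τ - z ⬝ x₀`
nonnegative on `S`. If `(-p, -r) ∉ K`, Hahn–Banach gives a functional `(z, τ) ↦ z ⬝ w + τ σ` is `≤ 0` on `K`
and positive at `(-p, -r)`. Then `σ ≤ 0`, and either `σ < 0` and `w / (-σ)` is a feasible
point violating `r ≤ p ⬝ x`, or `σ = 0` and `w` is a recession direction of the feasible set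
along which `p ⬝ x` decreases without bound.
-/

open Matrix BigOperators

/-- The convex conical hull `ℝ₊ · conv Ω`. -/
def coneHull {E : Type*} [AddCommGroup E] [Module ℝ E] (S : Set E) : Set E :=
  {x | ∃ t : ℝ, 0 ≤ t ∧ ∃ y ∈ convexHull ℝ S, x = t • y}

open Set Filter Topology

section ConeHull

variable {E : Type*} [AddCommGroup E] [Module ℝ E] {S T : Set E} {x y : E}

lemma subset_coneHull : S ⊆ coneHull S :=
  fun x hx => ⟨1, zero_le_one, x, subset_convexHull ℝ S hx, (one_smul ℝ x).symm⟩

lemma coneHull_mono (h : S ⊆ T) : coneHull S ⊆ coneHull T := by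
  rintro z ⟨t, ht, u, hu, rfl⟩
  exact ⟨t, ht, u, convexHull_mono h hu, rfl⟩

lemma smul_mem_coneHull {t : ℝ} (ht : 0 ≤ t) (hx : x ∈ coneHull S) : t • x ∈ coneHull S := by
  obtain ⟨c, hc, u, hu, rfl⟩ := hx
  exact ⟨t * c, mul_nonneg ht hc, u, hu, smul_smul t c u⟩

lemma add_mem_coneHull (hx : x ∈ coneHull S) (hy : y ∈ coneHull S) : x + y ∈ coneHull S := by
  obtain ⟨s, hs, x', hx', rfl⟩ := hx
  obtain ⟨t, ht, y', hy', rfl⟩ := hy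
  rcases (add_nonneg hs ht).eq_or_lt with hst | hst
  · obtain ⟨rfl, rfl⟩ : s = 0 ∧ t = 0 := ⟨by linarith, by linarith⟩
    exact ⟨0, le_rfl, x', hx', by simp⟩
  refine ⟨s + t, hst.le, (s / (s + t)) • x' + (t / (s + t)) • y',
    convex_convexHull ℝ S hx' hy' (by positivity) (by positivity) (by field_simp), ?_⟩
  rw [smul_add, smul_smul, smul_smul, mul_div_cancel₀ _ hst.ne', mul_div_cancel₀ _ hst.ne']

lemma convex_coneHull : Convex ℝ (coneHull S) :=
  fun _ hx _ hy _ _ hα hβ _ => add_mem_coneHull (smul_mem_coneHull hα hx) (smul_mem_coneHull hβ hy)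

lemma nonneg_of_mem_coneHull {L : E →ₗ[ℝ] ℝ} (hS : ∀ z ∈ S, 0 ≤ L z) (hx : x ∈ coneHull S) :
    0 ≤ L x := by
  obtain ⟨t, ht, u, hu, rfl⟩ := hx
  rw [map_smul, smul_eq_mul]
  exact mul_nonneg ht (convexHull_min hS (convex_halfSpace_ge L.isLinear 0) hu)

lemma coneHull_insert (v : E) (S : Set E) :
    coneHull (insert v S) = {z | ∃ t : ℝ, 0 ≤ t ∧ ∃ a ∈ coneHull S ∪ {0}, z = a + t • v} := by
  ext z
  constructor
  · rintro ⟨t, ht, y, hy, rfl⟩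
    rcases S.eq_empty_or_nonempty with rfl | hS
    · rw [insert_empty_eq, convexHull_singleton, mem_singleton_iff] at hy
      exact ⟨t, ht, 0, Or.inr rfl, by rw [hy, zero_add]⟩
    rw [convexHull_insert hS, mem_convexJoin] at hy
    obtain ⟨_, rfl, y', hy', α, β, hα, hβ, -, rfl⟩ := hy
    refine ⟨t * α, by positivity, (t * β) • y', Or.inl ⟨t * β, by positivity, y', hy', rfl⟩, ?_⟩
    rw [smul_add, smul_smul, smul_smul, add_comm]
  · rintro ⟨t, ht, a, ha, rfl⟩
    have hv : t • v ∈ coneHull (insert v S) :=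
      smul_mem_coneHull ht (subset_coneHull (mem_insert v S))
    rcases ha with ha | rfl
    · exact add_mem_coneHull (coneHull_mono (subset_insert v S) ha) hv
    · rwa [zero_add]

end ConeHull

section Closedness

variable {F : Type*} [NormedAddCommGroup F] [NormedSpace ℝ F] {A : Set F} {v : F}

/-- `δ` is the radius of a ball around `-v` missing `A`; it is applied to `t⁻¹ • a ∈ A`. -/
lemma exists_pos_mul_le_norm_add_smul (hA : IsClosed A)
    (hcone : ∀ t : ℝ, 0 ≤ t → ∀ a ∈ A, t • a ∈ A) (hv : -v ∉ A) :
    ∃ δ > 0, ∀ a ∈ A, ∀ t : ℝ, 0 ≤ t → δ * t ≤ ‖a + t • v‖ := by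
  obtain ⟨δ, hδ, hball⟩ := Metric.isOpen_iff.1 hA.isOpen_compl (-v) hv
  refine ⟨δ, hδ, fun a ha t ht => ?_⟩
  rcases ht.eq_or_lt with rfl | ht
  · simp
  have hfar : δ ≤ ‖t⁻¹ • a + v‖ := by
    by_contra! h
    refine hball ?_ (hcone _ (inv_nonneg.2 ht.le) a ha)
    rwa [Metric.mem_ball, dist_eq_norm, sub_neg_eq_add]
  calc δ * t ≤ ‖t⁻¹ • a + v‖ * t := mul_le_mul_of_nonneg_right hfar ht.le
    _ = ‖t • (t⁻¹ • a + v)‖ := by rw [norm_smul, Real.norm_of_nonneg ht.le, mul_comm]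
    _ = ‖a + t • v‖ := by rw [smul_add, smul_smul, mul_inv_cancel₀ ht.ne', one_smul]

lemma isClosed_add_ray (hA : IsClosed A) (hcone : ∀ t : ℝ, 0 ≤ t → ∀ a ∈ A, t • a ∈ A)
    (hv : -v ∉ A) : IsClosed {z | ∃ t : ℝ, 0 ≤ t ∧ ∃ a ∈ A, z = a + t • v} := by
  obtain ⟨δ, hδ, hbound⟩ := exists_pos_mul_le_norm_add_smul hA hcone hv
  refine IsSeqClosed.isClosed fun x z hx hlim => ?_
  choose t ht c hc hxeq using hx
  obtain ⟨M, hM⟩ := hlim.norm.bddAbove_range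
  have htM : ∀ k, t k ∈ Icc 0 (M / δ) := fun k => by
    refine ⟨ht k, (le_div_iff₀' hδ).2 ?_⟩
    calc δ * t k ≤ ‖x k‖ := hxeq k ▸ hbound _ (hc k) _ (ht k)
      _ ≤ M := hM ⟨k, rfl⟩
  obtain ⟨l, hl, φ, hφ, htl⟩ := isCompact_Icc.tendsto_subseq htM
  have hcl : Tendsto (c ∘ φ) atTop (𝓝 (z - l • v)) :=
    ((hlim.comp hφ.tendsto_atTop).sub (htl.smul_const v)).congr fun k => by
      simp [hxeq]
  exact ⟨l, hl.1, z - l • v, hA.mem_of_tendsto hcl (.of_forall fun k => hc (φ k)),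
    (sub_add_cancel z _).symm⟩

lemma isClosed_coneHull_insert {S : Set F} (hS : IsClosed (coneHull S)) (hv : -v ∉ coneHull S)
    (hv0 : v ≠ 0) : IsClosed (coneHull (insert v S)) := by
  rw [coneHull_insert]
  refine isClosed_add_ray (hS.union isClosed_singleton) ?_ (by simp [hv, hv0])
  rintro t ht a (ha | rfl)
  · exact Or.inl (smul_mem_coneHull ht ha)
  · exact Or.inr (smul_zero t)

end Closedness

lemma exists_nonpos_pos_of_notMem_cone {E : Type*} [AddCommGroup E] [TopologicalSpace E]
    [IsTopologicalAddGroup E] [Module ℝ E] [ContinuousSMul ℝ E] [LocallyConvexSpace ℝ E]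
    {K : Set E} {x : E} (hconv : Convex ℝ K) (hclosed : IsClosed K)
    (hcone : ∀ t : ℝ, 0 ≤ t → ∀ y ∈ K, t • y ∈ K) (hne : K.Nonempty) (hx : x ∉ K) :
    ∃ f : StrongDual ℝ E, (∀ y ∈ K, f y ≤ 0) ∧ 0 < f x := by
  obtain ⟨f, u, hK, hux⟩ := geometric_hahn_banach_closed_point hconv hclosed hx
  obtain ⟨y₀, hy₀⟩ := hne
  have hu : 0 < u := by simpa using hK 0 (by simpa using hcone 0 le_rfl y₀ hy₀)
  refine ⟨f, fun y hy => ?_, hu.trans hux⟩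
  by_contra! hpos
  have := hK _ (hcone (u / f y) (by positivity) y hy)
  rw [map_smul, smul_eq_mul, div_mul_cancel₀ _ hpos.ne'] at this
  exact lt_irrefl u this

section LinearInequalities

variable {ι : Type*} [Fintype ι] {I : Set ((ι → ℝ) × ℝ)} {p : ι → ℝ} {r : ℝ}

lemma exists_dotProduct_add_mul (f : (ι → ℝ) × ℝ →ₗ[ℝ] ℝ) :
    ∃ w : ι → ℝ, ∀ z τ, f (z, τ) = z ⬝ᵥ w + τ * f (0, 1) := by
  classical
  refine ⟨(dotProductEquiv ℝ ι).symm (f ∘ₗ LinearMap.inl ℝ _ ℝ), fun z τ => ?_⟩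
  have hsplit : ((z, τ) : (ι → ℝ) × ℝ) = (z, 0) + τ • ((0 : ι → ℝ), (1 : ℝ)) := by simp
  rw [hsplit, map_add, map_smul, smul_eq_mul, dotProduct_comm, ← dotProductEquiv_apply_apply,
    LinearEquiv.apply_symm_apply]
  rfl

lemma zero_neg_one_notMem_coneHull (hfeas : ∃ x₀, ∀ c ∈ I, c.1 ⬝ᵥ x₀ ≤ c.2) :
    ((0 : ι → ℝ), (-1 : ℝ)) ∉ coneHull I := by
  classical
  obtain ⟨x₀, hx₀⟩ := hfeas
  let L : (ι → ℝ) × ℝ →ₗ[ℝ] ℝ :=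
    LinearMap.snd ℝ _ ℝ - dotProductEquiv ℝ ι x₀ ∘ₗ LinearMap.fst ℝ _ ℝ
  have hL : ∀ c, L c = c.2 - x₀ ⬝ᵥ c.1 := fun _ => rfl
  have hLI : ∀ c ∈ I, 0 ≤ L c := fun c hc => by
    rw [hL, dotProduct_comm]
    linarith [hx₀ c hc]
  intro hmem
  have h := nonneg_of_mem_coneHull hLI hmem
  norm_num [hL] at h

lemma dotProduct_nonneg_of_recession {x₀ w : ι → ℝ} (hx₀ : ∀ c ∈ I, c.1 ⬝ᵥ x₀ ≤ c.2)
    (himp : ∀ x, (∀ c ∈ I, c.1 ⬝ᵥ x ≤ c.2) → r ≤ p ⬝ᵥ x) (hw : ∀ c ∈ I, c.1 ⬝ᵥ w ≤ 0) :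
    0 ≤ p ⬝ᵥ w := by
  have hray : ∀ τ : ℝ, 0 ≤ τ → r ≤ p ⬝ᵥ x₀ + τ * p ⬝ᵥ w := fun τ hτ => by
    have hfeas : ∀ c ∈ I, c.1 ⬝ᵥ (x₀ + τ • w) ≤ c.2 := fun c hc => by
      rw [dotProduct_add, dotProduct_smul, smul_eq_mul]
      nlinarith [hx₀ c hc, hw c hc]
    simpa [dotProduct_add, dotProduct_smul] using himp _ hfeas
  by_contra! hneg
  have h0 := hray 0 le_rfl
  have h1 := hray ((p ⬝ᵥ x₀ - r + 1) / -(p ⬝ᵥ w)) (div_nonneg (by linarith) (by linarith))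
  have hcancel : (p ⬝ᵥ x₀ - r + 1) / -(p ⬝ᵥ w) * p ⬝ᵥ w = -(p ⬝ᵥ x₀ - r + 1) := by
    field_simp [hneg.ne]
  linarith

lemma map_neg_nonpos_of_nonpos_on_constraints (hfeas : ∃ x₀, ∀ c ∈ I, c.1 ⬝ᵥ x₀ ≤ c.2)
    (himp : ∀ x, (∀ c ∈ I, c.1 ⬝ᵥ x ≤ c.2) → r ≤ p ⬝ᵥ x) (f : (ι → ℝ) × ℝ →ₗ[ℝ] ℝ)
    (hf₀ : f (0, 1) ≤ 0) (hfI : ∀ c ∈ I, f c ≤ 0) : f (-p, -r) ≤ 0 := by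
  obtain ⟨x₀, hx₀⟩ := hfeas
  obtain ⟨w, hw⟩ := exists_dotProduct_add_mul f
  have hwI : ∀ c ∈ I, c.1 ⬝ᵥ w + c.2 * f (0, 1) ≤ 0 := fun c hc => hw c.1 c.2 ▸ hfI c hc
  rw [hw, neg_dotProduct]
  rcases hf₀.lt_or_eq with hσ | hσ
  · have hσ' : 0 < -f (0, 1) := neg_pos.2 hσ
    have hx : ∀ c ∈ I, c.1 ⬝ᵥ ((-f (0, 1))⁻¹ • w) ≤ c.2 := fun c hc => by
      rw [dotProduct_smul, smul_eq_mul, inv_mul_le_iff₀ hσ']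
      linarith [hwI c hc]
    have hr := himp _ hx
    rw [dotProduct_smul, smul_eq_mul, le_inv_mul_iff₀ hσ'] at hr
    linarith
  · have := dotProduct_nonneg_of_recession hx₀ himp fun c hc => by
      simpa [hσ] using hwI c hc
    rw [hσ]
    linarith

end LinearInequalities

theorem generalized_farkas_general (n s q : ℕ) (U : Fin q → Set (Fin s → ℝ))
    (a : Fin q → ((Fin s → ℝ) →ᵃ[ℝ] (Fin n → ℝ)))
    (b : Fin q → ((Fin s → ℝ) →ᵃ[ℝ] ℝ))
    (C : Set ((Fin n → ℝ) × ℝ))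
    (hC : C = coneHull {p : (Fin n → ℝ) × ℝ | ∃ j, ∃ u ∈ U j, p = (a j u, b j u)})
    (hCclosed : IsClosed C)
    (hfeas : ∃ x0 : Fin n → ℝ, ∀ j, ∀ u ∈ U j, (a j u) ⬝ᵥ x0 ≤ b j u)
    (p : Fin n → ℝ) (r : ℝ)
    (himp : ∀ x : Fin n → ℝ, (∀ j, ∀ u ∈ U j, (a j u) ⬝ᵥ x ≤ b j u) → r ≤ p ⬝ᵥ x) :
    (-p, -r) ∈ closure (coneHull (insert ((0 : Fin n → ℝ), (1:ℝ))
        {p : (Fin n → ℝ) × ℝ | ∃ j, ∃ u ∈ U j, p = (a j u, b j u)})) ∧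
      IsClosed (coneHull (insert ((0 : Fin n → ℝ), (1:ℝ))
        {p : (Fin n → ℝ) × ℝ | ∃ j, ∃ u ∈ U j, p = (a j u, b j u)})) := by
  set S := {p : (Fin n → ℝ) × ℝ | ∃ j, ∃ u ∈ U j, p = (a j u, b j u)}
  set v : (Fin n → ℝ) × ℝ := (0, 1)
  have hS_feas : ∃ x₀, ∀ c ∈ S, c.1 ⬝ᵥ x₀ ≤ c.2 := by
    obtain ⟨x₀, hx₀⟩ := hfeas
    exact ⟨x₀, by rintro _ ⟨j, u, hu, rfl⟩; exact hx₀ j u hu⟩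
  have hS_imp : ∀ x, (∀ c ∈ S, c.1 ⬝ᵥ x ≤ c.2) → r ≤ p ⬝ᵥ x :=
    fun x hx => himp x fun j u hu => hx _ ⟨j, u, hu, rfl⟩
  have hK : IsClosed (coneHull (insert v S)) :=
    isClosed_coneHull_insert (hC ▸ hCclosed)
      (by simpa [v] using zero_neg_one_notMem_coneHull hS_feas) (by simp [v])
  refine ⟨subset_closure ?_, hK⟩
  by_contra hnot
  obtain ⟨f, hfK, hf⟩ := exists_nonpos_pos_of_notMem_cone convex_coneHull hK
    (fun t ht y hy => smul_mem_coneHull ht hy) ⟨v, subset_coneHull (mem_insert v S)⟩ hnot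
  refine hf.not_ge (map_neg_nonpos_of_nonpos_on_constraints hS_feas hS_imp f
    (hfK v (subset_coneHull (mem_insert v S))) fun c hc => ?_)
  exact hfK c (subset_coneHull (mem_insert_of_mem v hc))

/-- generalized non-homogeneous Farkas lemma (core cone statement). -/
theorem generalized_farkas (n s q : ℕ) (U : Fin q → Set (Fin s → ℝ))
    (hU : ∀ j, IsCompact (U j))
    (a : Fin q → ((Fin s → ℝ) →ᵃ[ℝ] (Fin n → ℝ)))
    (b : Fin q → ((Fin s → ℝ) →ᵃ[ℝ] ℝ))
    (C : Set ((Fin n → ℝ) × ℝ))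
    (hC : C = coneHull {p : (Fin n → ℝ) × ℝ | ∃ j, ∃ u ∈ U j, p = (a j u, b j u)})
    (hCclosed : IsClosed C)
    (hfeas : ∃ x0 : Fin n → ℝ, ∀ j, ∀ u ∈ U j, (a j u) ⬝ᵥ x0 ≤ b j u)
    (p : Fin n → ℝ) (r : ℝ)
    (himp : ∀ x : Fin n → ℝ, (∀ j, ∀ u ∈ U j, (a j u) ⬝ᵥ x ≤ b j u) → r ≤ p ⬝ᵥ x) :
    (-p, -r) ∈ closure (coneHull (insert ((0 : Fin n → ℝ), (1:ℝ))
        {p : (Fin n → ℝ) × ℝ | ∃ j, ∃ u ∈ U j, p = (a j u, b j u)})) ∧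
      IsClosed (coneHull (insert ((0 : Fin n → ℝ), (1:ℝ))
        {p : (Fin n → ℝ) × ℝ | ∃ j, ∃ u ∈ U j, p = (a j u, b j u)})) :=
  generalized_farkas_general n s q U a b C hC hCclosed hfeas p r himp
end

section
/- Let $U_1,\dots,U_q \subset \mathbb{R}^s$ be compact convex sets and $F_j : \mathbb{R}^s \to \mathbb{R}^{n+1}$ affine maps. Suppose there exists $\hat{x} \in \mathbb{R}^n$ such that, writing $F_j(u_j) = (a_j(u_j), b_j(u_j))$, the strict Slater condition $a_j(u_j)^\top \hat{x} < b_j(u_j)$ holds for all $u_j \in U_j$ and all $j = 1,\dots,q$. Then $0_{n+1} \notin \mathrm{conv}\big(\bigcup_{j=1}^q F_j(U_j)\big)$, and the cone $C := \mathrm{cone}\big(\bigcup_{j=1}^q F_j(U_j)\big)$ is closed. -/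
open Matrix BigOperators

section ConvexHull

variable {E : Type*} [AddCommGroup E] [Module ℝ E]

theorem zero_notMem_convexHull_of_forall_pos {s : Set E} (f : E →ₗ[ℝ] ℝ)
    (hf : ∀ x ∈ s, 0 < f x) : (0 : E) ∉ convexHull ℝ s := fun h0 => by
  have : 0 < f 0 := convexHull_min hf (convex_halfSpace_gt f.isLinear 0) h0
  simp at this

theorem convexHull_eq_iUnion_image_stdSimplex [FiniteDimensional ℝ E] (s : Set E) :
    convexHull ℝ s = ⋃ k ∈ Finset.range (Module.finrank ℝ E + 2),
      (fun p : (Fin k → ℝ) × (Fin k → E) => ∑ i, p.1 i • p.2 i) ''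
        (stdSimplex ℝ (Fin k) ×ˢ Set.univ.pi fun _ => s) := by
  refine subset_antisymm (fun x hx => ?_) ?_
  · obtain ⟨ι, _, z, w, hzs, hz, hw0, hw1, rfl⟩ := eq_pos_convex_span_of_mem_convexHull hx
    have hcard : Fintype.card ι < Module.finrank ℝ E + 2 := by
      have := hz.card_le_finrank_succ
      have := Submodule.finrank_le (vectorSpan ℝ (Set.range z))
      omega
    let e := Fintype.equivFin ι
    refine Set.mem_biUnion (Finset.mem_range.2 hcard)
      ⟨(w ∘ e.symm, z ∘ e.symm), ⟨⟨fun i => (hw0 _).le, ?_⟩, fun i _ => hzs ⟨_, rfl⟩⟩, ?_⟩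
    · simpa only [Function.comp_apply, e.symm.sum_comp] using hw1
    · exact e.symm.sum_comp fun i => w i • z i
  · refine Set.iUnion₂_subset fun k _ => ?_
    rintro _ ⟨⟨w, z⟩, ⟨⟨hw0, hw1⟩, hz⟩, rfl⟩
    exact (convex_convexHull ℝ s).sum_mem (fun i _ => hw0 i) hw1
      fun i _ => subset_convexHull ℝ s (hz i trivial)

theorem IsCompact.convexHull [TopologicalSpace E] [IsTopologicalAddGroup E] [ContinuousSMul ℝ E]
    [FiniteDimensional ℝ E] {s : Set E} (hs : IsCompact s) : IsCompact (convexHull ℝ s) := by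
  rw [convexHull_eq_iUnion_image_stdSimplex]
  refine (Finset.range _).finite_toSet.isCompact_biUnion fun k _ =>
    ((isCompact_stdSimplex ℝ (Fin k)).prod (isCompact_univ_pi fun _ => hs)).image ?_
  fun_prop

end ConvexHull

theorem isClosed_setOf_exists_nonneg_smul {E : Type*} [NormedAddCommGroup E] [NormedSpace ℝ E]
    {K : Set E} (hK : IsCompact K) (h0 : (0 : E) ∉ K) :
    IsClosed {x | ∃ t : ℝ, 0 ≤ t ∧ ∃ y ∈ K, x = t • y} := by
  obtain ⟨δ, hδ, hball⟩ := Metric.isOpen_iff.1 hK.isClosed.isOpen_compl 0 h0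
  have hδK : ∀ y ∈ K, δ ≤ ‖y‖ := fun y hy => by
    by_contra! h
    exact hball (mem_ball_zero_iff.2 h) hy
  have hbounded : ∀ R, Metric.ball 0 R ∩ {x | ∃ t : ℝ, 0 ≤ t ∧ ∃ y ∈ K, x = t • y} ⊆
      (fun p : ℝ × E => p.1 • p.2) '' (Set.Icc 0 (R / δ) ×ˢ K) := by
    rintro R _ ⟨hR, t, ht, y, hy, rfl⟩
    refine ⟨(t, y), ⟨⟨ht, ?_⟩, hy⟩, rfl⟩
    rw [mem_ball_zero_iff, norm_smul, Real.norm_of_nonneg ht] at hR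
    rw [le_div_iff₀ hδ]
    nlinarith [hδK y hy]
  refine isClosed_of_closure_subset fun x hx => ?_
  have hcompact : IsCompact
      ((fun p : ℝ × E => p.1 • p.2) '' (Set.Icc 0 ((‖x‖ + 1) / δ) ×ˢ K)) :=
    (isCompact_Icc.prod hK).image (by fun_prop)
  obtain ⟨⟨t, y⟩, ⟨⟨ht, -⟩, hy⟩, rfl⟩ := closure_minimal (hbounded _) hcompact.isClosed
    (Metric.isOpen_ball.inter_closure ⟨mem_ball_zero_iff.2 (lt_add_one _), hx⟩)
  exact ⟨t, ht, y, hy, rfl⟩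

theorem slater_closed_cone_general (n s q : ℕ) (U : Fin q → Set (Fin s → ℝ))
    (hUc : ∀ j, IsCompact (U j))
    (F : Fin q → ((Fin s → ℝ) →ᵃ[ℝ] ((Fin n → ℝ) × ℝ)))
    (xhat : Fin n → ℝ)
    (hslater : ∀ j, ∀ u ∈ U j, (F j u).1 ⬝ᵥ xhat < (F j u).2) :
    (0 : (Fin n → ℝ) × ℝ) ∉ convexHull ℝ (⋃ j, F j '' U j) ∧
      IsClosed (coneHull (⋃ j, F j '' U j)) := by
  have hcompact : IsCompact (⋃ j, F j '' U j) :=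
    isCompact_iUnion fun j => (hUc j).image (F j).continuous_of_finiteDimensional
  have h0 : (0 : (Fin n → ℝ) × ℝ) ∉ convexHull ℝ (⋃ j, F j '' U j) := by
    refine zero_notMem_convexHull_of_forall_pos
      (LinearMap.snd ℝ _ ℝ - (dotProductBilin ℝ ℝ).flip xhat ∘ₗ LinearMap.fst ℝ _ ℝ) ?_
    rintro _ ⟨_, ⟨j, rfl⟩, u, hu, rfl⟩
    simpa [sub_pos] using hslater j u hu
  exact ⟨h0, isClosed_setOf_exists_nonneg_smul hcompact.convexHull h0⟩

/-- under the Slater condition the cone is closed. -/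
theorem slater_closed_cone (n s q : ℕ) (U : Fin q → Set (Fin s → ℝ))
    (hUc : ∀ j, IsCompact (U j)) (hUconv : ∀ j, Convex ℝ (U j))
    (F : Fin q → ((Fin s → ℝ) →ᵃ[ℝ] ((Fin n → ℝ) × ℝ)))
    (xhat : Fin n → ℝ)
    (hslater : ∀ j, ∀ u ∈ U j, (F j u).1 ⬝ᵥ xhat < (F j u).2) :
    (0 : (Fin n → ℝ) × ℝ) ∉ convexHull ℝ (⋃ j, F j '' U j) ∧
      IsClosed (coneHull (⋃ j, F j '' U j)) :=
  slater_closed_cone_general n s q U hUc F xhat hslater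
end

section
/- Let $f : \mathbb{R}^s \to \mathbb{R}$ be defined by $f(u) = u^\top u - 1$ and let $g(u) = c^\top u + d$ be affine with $c \in \mathbb{R}^s$, $d \in \mathbb{R}$. Then $g(u) \le 0$ for all $u$ with $\|u\| \le 1$ if and only if $\|c\| + d \le 0$, which in turn holds if and only if there exists $\lambda \ge 0$ such that the $(s+1)\times(s+1)$ symmetric matrix $\begin{pmatrix} \lambda I_s & -\frac{1}{2} c \\ -\frac{1}{2} c^\top & -\lambda - d \end{pmatrix}$ is positive semidefinite. -/
open Matrix BigOperators RealInnerProductSpace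

/-!
The supremum of `u ↦ ⟪c, u⟫` over the unit ball is `‖c‖`, attained at `‖c‖⁻¹ • c`; this gives the
first equivalence. Writing `x = (u, t)`, the quadratic form of the block matrix is
`λ‖u‖² - ⟪c, u⟫ t - (λ + d) t²`. For `λ = ‖c‖ / 2` Cauchy–Schwarz bounds it below by
`‖c‖ / 2 · (‖u‖ - |t|)²` as soon as `‖c‖ + d ≤ 0`; conversely, its nonnegativity at `t = 1` gives
`⟪c, u⟫ + d ≤ λ (‖u‖² - 1) ≤ 0` on the unit ball, which brings us back to the first equivalence.
-/

section InnerProductSpace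

variable {E : Type*} [NormedAddCommGroup E] [InnerProductSpace ℝ E]

theorem forall_norm_le_one_inner_add_nonpos_iff (c : E) (d : ℝ) :
    (∀ u : E, ‖u‖ ≤ 1 → ⟪c, u⟫ + d ≤ 0) ↔ ‖c‖ + d ≤ 0 := by
  constructor
  · intro h
    have hc : ⟪c, ‖c‖⁻¹ • c⟫ = ‖c‖ := by
      rw [real_inner_smul_right, real_inner_self_eq_norm_sq, sq, ← mul_assoc, inv_mul_mul_self]
    have hu : ‖‖c‖⁻¹ • c‖ ≤ 1 := by simpa using inv_norm_smul_mem_unitClosedBall c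
    exact hc ▸ h _ hu
  · intro h u hu
    calc ⟪c, u⟫ + d ≤ ‖c‖ * ‖u‖ + d := by gcongr; exact real_inner_le_norm c u
      _ ≤ ‖c‖ + d := by gcongr; exact mul_le_of_le_one_right (norm_nonneg c) hu
      _ ≤ 0 := h

theorem quadratic_nonneg_of_norm_add_nonpos {c : E} {d : ℝ} (h : ‖c‖ + d ≤ 0) (u : E) (t : ℝ) :
    0 ≤ ‖c‖ / 2 * ‖u‖ ^ 2 - ⟪c, u⟫ * t - (‖c‖ / 2 + d) * t ^ 2 := by
  have hcs : ⟪c, u⟫ * t ≤ ‖c‖ * ‖u‖ * |t| :=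
    calc ⟪c, u⟫ * t ≤ |⟪c, u⟫| * |t| := by rw [← abs_mul]; exact le_abs_self _
      _ ≤ ‖c‖ * ‖u‖ * |t| := by gcongr; exact abs_real_inner_le_norm c u
  have hd : ‖c‖ * t ^ 2 ≤ -d * t ^ 2 := by gcongr; linarith
  calc 0 ≤ ‖c‖ / 2 * (‖u‖ - |t|) ^ 2 := by positivity
    _ = ‖c‖ / 2 * ‖u‖ ^ 2 - ‖c‖ * ‖u‖ * |t| + ‖c‖ / 2 * t ^ 2 := by rw [← sq_abs t]; ring
    _ ≤ ‖c‖ / 2 * ‖u‖ ^ 2 - ⟪c, u⟫ * t - (‖c‖ / 2 + d) * t ^ 2 := by linarith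

theorem norm_add_nonpos_of_quadratic_nonneg {c : E} {d lam : ℝ} (hlam : 0 ≤ lam)
    (h : ∀ (u : E) (t : ℝ), 0 ≤ lam * ‖u‖ ^ 2 - ⟪c, u⟫ * t - (lam + d) * t ^ 2) :
    ‖c‖ + d ≤ 0 := by
  refine (forall_norm_le_one_inner_add_nonpos_iff c d).1 fun u hu => ?_
  have hu2 : ‖u‖ ^ 2 ≤ 1 := pow_le_one₀ (norm_nonneg u) hu
  nlinarith [h u 1, mul_le_mul_of_nonneg_left hu2 hlam]

theorem exists_nonneg_forall_quadratic_nonneg_iff (c : E) (d : ℝ) :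
    (∃ lam : ℝ, 0 ≤ lam ∧
      ∀ (u : E) (t : ℝ), 0 ≤ lam * ‖u‖ ^ 2 - ⟪c, u⟫ * t - (lam + d) * t ^ 2) ↔ ‖c‖ + d ≤ 0 :=
  ⟨fun ⟨_, hlam, h⟩ => norm_add_nonpos_of_quadratic_nonneg hlam h,
    fun h => ⟨‖c‖ / 2, by positivity, quadratic_nonneg_of_norm_add_nonpos h⟩⟩

end InnerProductSpace

section SLemmaMatrix

variable {s : ℕ} (c : EuclideanSpace ℝ (Fin s)) (d lam : ℝ)

noncomputable def sLemmaMatrix : Matrix (Fin s ⊕ Unit) (Fin s ⊕ Unit) ℝ :=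
  fromBlocks (lam • 1) (-(1 / 2 : ℝ) • replicateCol Unit c.ofLp)
    (-(1 / 2 : ℝ) • replicateRow Unit c.ofLp) ((-lam - d) • 1)

theorem dotProduct_sLemmaMatrix_mulVec (u : EuclideanSpace ℝ (Fin s)) (t : ℝ) :
    Sum.elim u.ofLp (fun _ => t) ⬝ᵥ (sLemmaMatrix c d lam *ᵥ Sum.elim u.ofLp (fun _ => t)) =
      lam * ‖u‖ ^ 2 - ⟪c, u⟫ * t - (lam + d) * t ^ 2 := by
  have hcol : replicateCol Unit c.ofLp *ᵥ (fun _ => t) = t • c.ofLp := by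
    ext i; simp [mulVec, dotProduct, mul_comm]
  rw [← real_inner_self_eq_norm_sq, EuclideanSpace.inner_eq_star_dotProduct,
    EuclideanSpace.inner_eq_star_dotProduct, sLemmaMatrix, fromBlocks_mulVec]
  simp [sumElim_dotProduct_sumElim, neg_mulVec, smul_mulVec, hcol, replicateRow_mulVec_eq_const,
    dotProduct_comm c.ofLp]
  ring

theorem forall_dotProduct_sLemmaMatrix_mulVec_nonneg_iff :
    (∀ x : Fin s ⊕ Unit → ℝ, 0 ≤ x ⬝ᵥ (sLemmaMatrix c d lam *ᵥ x)) ↔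
      ∀ (u : EuclideanSpace ℝ (Fin s)) (t : ℝ),
        0 ≤ lam * ‖u‖ ^ 2 - ⟪c, u⟫ * t - (lam + d) * t ^ 2 := by
  refine ⟨fun h u t => dotProduct_sLemmaMatrix_mulVec c d lam u t ▸ h _, fun h x => ?_⟩
  have hx : Sum.elim (WithLp.toLp 2 (x ∘ Sum.inl)).ofLp (fun _ => x (Sum.inr ())) = x := by
    ext (_ | _) <;> rfl
  rw [← hx, dotProduct_sLemmaMatrix_mulVec]
  exact h _ _

end SLemmaMatrix

/-- the S-lemma for a linear function over the unit ball. -/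
theorem s_lemma_linear_ball (s : ℕ) (c : EuclideanSpace ℝ (Fin s)) (d : ℝ)
    (M : ℝ → Matrix (Fin s ⊕ Unit) (Fin s ⊕ Unit) ℝ)
    (hM : ∀ lam, M lam = fun p q =>
      match p, q with
      | Sum.inl i, Sum.inl j => if i = j then lam else 0
      | Sum.inl i, Sum.inr _ => -(c i) / 2
      | Sum.inr _, Sum.inl i => -(c i) / 2
      | Sum.inr _, Sum.inr _ => -lam - d) :
    ((∀ u : EuclideanSpace ℝ (Fin s), ‖u‖ ≤ 1 → ⟪c, u⟫ + d ≤ 0) ↔ ‖c‖ + d ≤ 0) ∧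
      ((‖c‖ + d ≤ 0) ↔ ∃ lam : ℝ, 0 ≤ lam ∧
        ∀ x : Fin s ⊕ Unit → ℝ, 0 ≤ x ⬝ᵥ (M lam *ᵥ x)) := by
  have hM' : M = sLemmaMatrix c d := funext fun lam => by
    rw [hM]
    ext (i | _) (j | _) <;> simp [sLemmaMatrix, one_apply, div_eq_inv_mul]
  rw [hM']
  simp_rw [forall_dotProduct_sLemmaMatrix_mulVec_nonneg_iff]
  exact ⟨forall_norm_le_one_inner_add_nonpos_iff c d,
    (exists_nonneg_forall_quadratic_nonneg_iff c d).symm⟩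
end
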